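/- arXiv:2501.18920 — 2 statements merged into one kernel-verified Lean document; each statement's English description precedes it below -/
import Mathlib

section
/- Let m ≥ 5 be an odd integer, m̄ = m/2, and ρ > 0. Define f_ρ(t) = (t^m + ρ)^{1/2} and Γ_ρ(t) = (f_ρ(t), t) for t ≥ 0. Then for all real numbers s ≥ t ≥ 0, the arc length of Γ_ρ over [t,s] exceeds the chord length by at most (m̄²/2)·(m̄ − 1)·s^{m−3}·(s−t)², i.e. ∫_t^s √(1 + f_ρ′(u)²) du − ‖Γ_ρ(s) − Γ_ρ(t)‖ ≤ (m²(m−2)/16)·s^{m−3}·(s−t)². -/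
/-!
Write `g = f_ρ'`, which is nonnegative and increasing on `[0, ∞)`, and let `c` be the mean of
`g t` and `g s`. Since `(√(1 + x²))'' ≤ 1`, `√(1 + x²)` lies below its tangent at `c` plus
`(x - c)² / 2`, and `|g u - c| ≤ (g s - g t) / 2` on `[t, s]`. The tangent part integrates to
`((s - t) + c (f_ρ s - f_ρ t)) / √(1 + c²)`, which is at most the chord by Cauchy–Schwarz, so the
excess of arc over chord is at most `(s - t) (g s - g t)² / 8`. Finally
`(g s - g t)² ≤ g s · (g s - g t) ≤ (m² (m - 1) / 4) s^(m-3) (s - t)`.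
-/

open Real Set

theorem sqrt_one_add_sq_le_tangent (x c : ℝ) :
    √(1 + x ^ 2) ≤ (1 + c * x) / √(1 + c ^ 2) + (x - c) ^ 2 / 2 := by
  have hq : 1 ≤ √(1 + c ^ 2) := one_le_sqrt.mpr (by nlinarith)
  have hprod : √(1 + x ^ 2) * √(1 + c ^ 2) = √((1 + c * x) ^ 2 + (x - c) ^ 2) := by
    rw [← sqrt_mul (by positivity)]
    ring_nf
  -- After squaring, the gap between the two sides is `(x - c)² (x + c)² / 4`.
  have hsq : √((1 + c * x) ^ 2 + (x - c) ^ 2) ≤ 1 + c * x + (x - c) ^ 2 / 2 :=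
    sqrt_le_iff.mpr ⟨by nlinarith [sq_nonneg (x + c), sq_nonneg (x - c)],
      by nlinarith [sq_nonneg ((x - c) * (x + c))]⟩
  rw [div_add' _ _ _ (by positivity), le_div_iff₀ (by positivity), hprod]
  nlinarith [sq_nonneg (x - c)]

theorem add_mul_div_sqrt_le_sqrt (a b c : ℝ) : (a + c * b) / √(1 + c ^ 2) ≤ √(b ^ 2 + a ^ 2) := by
  rw [div_le_iff₀ (by positivity), ← sqrt_mul (by positivity)]
  refine (le_abs_self _).trans (abs_le_sqrt ?_)
  nlinarith [sq_nonneg (b - c * a)]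

theorem integral_sqrt_one_add_sq_sub_chord_le {F g : ℝ → ℝ} {t s : ℝ} (hts : t ≤ s)
    (hF : ∀ u ∈ Icc t s, HasDerivAt F (g u) u) (hgc : ContinuousOn g (Icc t s))
    (hg : MonotoneOn g (Icc t s)) :
    (∫ u in t..s, √(1 + g u ^ 2)) - √((F s - F t) ^ 2 + (s - t) ^ 2) ≤
      (s - t) * (g s - g t) ^ 2 / 8 := by
  set c := (g t + g s) / 2 with hc
  obtain ⟨q, hq⟩ : ∃ q, q = √(1 + c ^ 2) := ⟨_, rfl⟩
  have hpt : ∀ u ∈ Icc t s, √(1 + g u ^ 2) ≤ (1 / q + (g s - g t) ^ 2 / 8) + c / q * g u := by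
    intro u hu
    have hmid : (g u - c) ^ 2 ≤ (g s - g t) ^ 2 / 4 := by
      have hlo := sub_nonneg.2 (hg ⟨le_rfl, hts⟩ hu hu.1)
      have hhi := sub_nonneg.2 (hg hu ⟨hts, le_rfl⟩ hu.2)
      nlinarith [mul_nonneg hlo hhi]
    have htan := sqrt_one_add_sq_le_tangent (g u) c
    rw [← hq, add_div, mul_div_right_comm] at htan
    linarith
  rw [← uIcc_of_le hts] at hF hgc
  have hgi : IntervalIntegrable g MeasureTheory.volume t s := hgc.intervalIntegrable
  have hint := intervalIntegral.integral_mono_on hts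
    (ContinuousOn.intervalIntegrable (u := fun u ↦ √(1 + g u ^ 2)) (by fun_prop))
    (intervalIntegrable_const.add (hgi.const_mul _)) hpt
  rw [intervalIntegral.integral_add intervalIntegrable_const (hgi.const_mul _),
    intervalIntegral.integral_const_mul, intervalIntegral.integral_eq_sub_of_hasDerivAt hF hgi,
    intervalIntegral.integral_const, smul_eq_mul] at hint
  have hchord := add_mul_div_sqrt_le_sqrt (s - t) (F s - F t) c
  rw [← hq, add_div, div_eq_mul_one_div (s - t), mul_div_right_comm] at hchord
  linarith

noncomputable def sqrtPowAddDeriv (m : ℕ) (ρ u : ℝ) : ℝ := m * u ^ (m - 1) / (2 * √(u ^ m + ρ))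

section
variable {m : ℕ} {ρ : ℝ}

theorem hasDerivAt_sqrt_pow_add (hρ : 0 < ρ) {u : ℝ} (hu : 0 ≤ u) :
    HasDerivAt (fun y ↦ √(y ^ m + ρ)) (sqrtPowAddDeriv m ρ u) u :=
  ((hasDerivAt_pow m u).add_const ρ).sqrt (by positivity)

theorem sqrtPowAddDeriv_nonneg {u : ℝ} (hu : 0 ≤ u) : 0 ≤ sqrtPowAddDeriv m ρ u := by
  unfold sqrtPowAddDeriv
  positivity

theorem continuousOn_sqrtPowAddDeriv (hρ : 0 < ρ) : ContinuousOn (sqrtPowAddDeriv m ρ) (Ici 0) :=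
  ContinuousOn.div (by fun_prop) (by fun_prop) fun u hu ↦ by
    have : 0 ≤ u := hu
    positivity

theorem monotoneOn_sqrtPowAddDeriv (hm : 2 ≤ m) (hρ : 0 < ρ) :
    MonotoneOn (sqrtPowAddDeriv m ρ) (Ici 0) := by
  obtain ⟨k, rfl⟩ := Nat.exists_eq_add_of_le' hm
  intro u (hu : 0 ≤ u) v (hv : 0 ≤ v) huv
  have key : u ^ (k + 1) * √(v ^ (k + 2) + ρ) ≤ v ^ (k + 1) * √(u ^ (k + 2) + ρ) := by
    rw [← sqrt_sq (pow_nonneg hu (k + 1)), ← sqrt_sq (pow_nonneg hv (k + 1)),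
      ← sqrt_mul (by positivity), ← sqrt_mul (by positivity)]
    refine sqrt_le_sqrt ?_
    have h1 : u ^ k ≤ v ^ k := pow_le_pow_left₀ hu huv k
    have h2 : u ^ (k + 2) ≤ v ^ (k + 2) := pow_le_pow_left₀ hu huv _
    have h12 := mul_le_mul h1 h2 (pow_nonneg hu _) (pow_nonneg hv k)
    rw [show (u ^ (k + 1)) ^ 2 = u ^ k * u ^ (k + 2) by ring,
      show (v ^ (k + 1)) ^ 2 = v ^ k * v ^ (k + 2) by ring]
    nlinarith [mul_le_mul_of_nonneg_right h1
      (mul_nonneg (pow_nonneg hu (k + 2)) (pow_nonneg hv (k + 2)))]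
  show ((k + 2 : ℕ) : ℝ) * u ^ (k + 1) / (2 * √(u ^ (k + 2) + ρ)) ≤
    ((k + 2 : ℕ) : ℝ) * v ^ (k + 1) / (2 * √(v ^ (k + 2) + ρ))
  rw [div_le_div_iff₀ (by positivity) (by positivity)]
  nlinarith [mul_le_mul_of_nonneg_left key (Nat.cast_nonneg (α := ℝ) (k + 2))]

theorem sqrtPowAddDeriv_sub_sq_le (hm : 3 ≤ m) (hρ : 0 < ρ) {t s : ℝ} (ht : 0 ≤ t) (hts : t ≤ s) :
    (sqrtPowAddDeriv m ρ s - sqrtPowAddDeriv m ρ t) ^ 2 ≤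
      (m : ℝ) ^ 2 * ((m : ℝ) - 1) / 4 * s ^ (m - 3) * (s - t) := by
  have hD0 : 0 ≤ sqrtPowAddDeriv m ρ s - sqrtPowAddDeriv m ρ t :=
    sub_nonneg.2 (monotoneOn_sqrtPowAddDeriv (by omega) hρ ht (ht.trans hts) hts)
  have hgt0 := sqrtPowAddDeriv_nonneg (m := m) (ρ := ρ) ht
  obtain ⟨n, rfl⟩ := Nat.exists_eq_add_of_le' hm
  have hs : 0 ≤ s := ht.trans hts
  obtain ⟨Q, hQ⟩ : ∃ Q, Q = √(s ^ (n + 3) + ρ) := ⟨_, rfl⟩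
  have hQ0 : 0 < Q := hQ ▸ sqrt_pos.2 (by positivity)
  have hQsq : Q ^ 2 = s ^ (n + 3) + ρ := hQ ▸ sq_sqrt (by positivity)
  have hgs : sqrtPowAddDeriv (n + 3) ρ s = (n + 3) * s ^ (n + 2) / (2 * Q) := by
    rw [hQ, sqrtPowAddDeriv]; push_cast; rfl
  have hgt : (n + 3) * t ^ (n + 2) / (2 * Q) ≤ sqrtPowAddDeriv (n + 3) ρ t := by
    rw [hQ, sqrtPowAddDeriv]
    push_cast
    gcongr
  have hpow : s ^ (n + 2) - t ^ (n + 2) ≤ (s - t) * (n + 2) * s ^ (n + 1) := by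
    have := abs_pow_sub_pow_le s t (n + 2)
    rw [abs_of_nonneg (sub_nonneg.2 hts), abs_of_nonneg hs, abs_of_nonneg ht,
      max_eq_left hts] at this
    push_cast at this
    exact (le_abs_self _).trans this
  have hD : sqrtPowAddDeriv (n + 3) ρ s - sqrtPowAddDeriv (n + 3) ρ t ≤
      (n + 3) * ((s - t) * (n + 2) * s ^ (n + 1)) / (2 * Q) :=
    calc _ ≤ (n + 3) * (s ^ (n + 2) - t ^ (n + 2)) / (2 * Q) := by
          rw [hgs, mul_sub, sub_div]; linarith
      _ ≤ _ := by gcongr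
  calc (sqrtPowAddDeriv (n + 3) ρ s - sqrtPowAddDeriv (n + 3) ρ t) ^ 2
      ≤ sqrtPowAddDeriv (n + 3) ρ s * ((n + 3) * ((s - t) * (n + 2) * s ^ (n + 1)) / (2 * Q)) := by
        rw [sq]; exact mul_le_mul (by linarith) hD hD0 (by linarith)
    _ = (n + 3) ^ 2 * (n + 2) * (s - t) * (s ^ n * s ^ (n + 3)) / (4 * Q ^ 2) := by
        rw [hgs]; field_simp; ring
    _ ≤ (n + 3) ^ 2 * (n + 2) * (s - t) * (s ^ n * Q ^ 2) / (4 * Q ^ 2) := by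
        gcongr
        rw [hQsq]; linarith
    _ = _ := by
        push_cast
        field_simp
        ring_nf

end

theorem statement3_general (m : ℕ) (hm : 5 ≤ m) (ρ : ℝ) (hρ : 0 < ρ)
    (f : ℝ → ℝ) (hf : ∀ t : ℝ, f t = Real.sqrt (t ^ m + ρ))
    (t s : ℝ) (ht : 0 ≤ t) (hts : t ≤ s) :
    (∫ u in t..s, Real.sqrt (1 + (deriv f u) ^ 2)) -
      Real.sqrt ((f s - f t) ^ 2 + (s - t) ^ 2) ≤
    ((m : ℝ) ^ 2 * ((m : ℝ) - 2) / 16) * s ^ (m - 3) * (s - t) ^ 2 := by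
  have hIcc : Icc t s ⊆ Ici 0 := fun u hu ↦ ht.trans hu.1
  have hf' : ∀ u ∈ Icc t s, HasDerivAt f (sqrtPowAddDeriv m ρ u) u := fun u hu ↦ by
    rw [funext hf]
    exact hasDerivAt_sqrt_pow_add hρ (hIcc hu)
  have harc := integral_sqrt_one_add_sq_sub_chord_le hts hf'
    ((continuousOn_sqrtPowAddDeriv hρ).mono hIcc)
    ((monotoneOn_sqrtPowAddDeriv (by omega) hρ).mono hIcc)
  have hint : ∫ u in t..s, √(1 + deriv f u ^ 2) = ∫ u in t..s, √(1 + sqrtPowAddDeriv m ρ u ^ 2) :=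
    intervalIntegral.integral_congr fun u hu ↦ by
      rw [uIcc_of_le hts] at hu
      simp only [(hf' u hu).deriv]
  have hD := sqrtPowAddDeriv_sub_sq_le (m := m) (by omega) hρ ht hts
  have hm' : (5 : ℝ) ≤ m := by exact_mod_cast hm
  have hs : 0 ≤ s := ht.trans hts
  calc _ ≤ (s - t) * (sqrtPowAddDeriv m ρ s - sqrtPowAddDeriv m ρ t) ^ 2 / 8 := hint ▸ harc
    _ ≤ (s - t) * ((m : ℝ) ^ 2 * ((m : ℝ) - 1) / 4 * s ^ (m - 3) * (s - t)) / 8 := by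
        gcongr
    _ = (m : ℝ) ^ 2 * ((m : ℝ) - 1) / 32 * s ^ (m - 3) * (s - t) ^ 2 := by ring
    _ ≤ _ := by
        gcongr ?_ * _ * _
        nlinarith [sq_nonneg (m : ℝ)]

/-- for `f_ρ(t) = √(t^m + ρ)` and `Γ_ρ(t) = (f_ρ(t), t)`, the arc length of
`Γ_ρ` over `[t,s]` exceeds the chord length by at most `(m²(m−2)/16) s^{m−3} (s−t)²`. -/
theorem statement3 (m : ℕ) (hodd : Odd m) (hm : 5 ≤ m) (ρ : ℝ) (hρ : 0 < ρ)
    (f : ℝ → ℝ) (hf : ∀ t : ℝ, f t = Real.sqrt (t ^ m + ρ))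
    (t s : ℝ) (ht : 0 ≤ t) (hts : t ≤ s) :
    (∫ u in t..s, Real.sqrt (1 + (deriv f u) ^ 2)) -
      Real.sqrt ((f s - f t) ^ 2 + (s - t) ^ 2) ≤
    ((m : ℝ) ^ 2 * ((m : ℝ) - 2) / 16) * s ^ (m - 3) * (s - t) ^ 2 :=
  statement3_general m hm ρ hρ f hf t s ht hts
end

section
/- Let m ≥ 5 be an odd integer, λ < 0, L > 0, and let ω : [0,L] → ℝ² and θ : [0,L] → ℝ be continuously differentiable functions satisfying ω′(t) = (cos θ(t), sin θ(t)) and θ′(t) = λ·Q(ω(t)) for all t ∈ [0,L]. Suppose t* ∈ (0,L) is such that ω₁(t*) > 0, P(ω(t*)) > 0, sin θ(t*) > 0, and the function t ↦ P(ω(t)) (which is twice continuously differentiable) has vanishing first derivative and nonpositive second derivative at t*. Then |λ|·P(ω(t*))^{(m+2)/m} ≤ m(m−1)/8. -/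
/-- `P(x₁,x₂) = x₁² − x₂^m`. -/
noncomputable def Pf (m : ℕ) (x : ℝ × ℝ) : ℝ := x.1 ^ 2 - x.2 ^ m

/-- `Q(x₁,x₂) = 4x₁(x₁² − x₂^m)`. -/
noncomputable def Qf (m : ℕ) (x : ℝ × ℝ) : ℝ := 4 * x.1 * (x.1 ^ 2 - x.2 ^ m)

/-!
Write `A = ω₁(t*)`, `B = ω₂(t*)`, `c + i s = e^{iθ(t*)}` and `P = A² − Bᵐ`. The first-order
condition reads `2Ac = m Bᵐ⁻¹ s`; multiplying the second derivative of `P ∘ ω` by `s` and using it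
together with `s² + c² = 1` cancels the cross terms and leaves
`2c²s + 8|λ|A²P − m(m−1)Bᵐ⁻² s³ ≤ 0`, so `8|λ|A²P ≤ m(m−1)Bᵐ⁻²` (and `B > 0`, `m` being odd).
Weighted AM–GM with weights `2/m`, `(m−2)/m` gives `P^{2/m} Bᵐ⁻² ≤ P + Bᵐ = A²`; multiplying the
previous inequality by `P^{2/m}` and dividing by `8A²` gives the bound.
-/

open Real Filter Topology

theorem HasDerivAt.fst {𝕜 E F : Type*} [NontriviallyNormedField 𝕜] [NormedAddCommGroup E]
    [NormedSpace 𝕜 E] [NormedAddCommGroup F] [NormedSpace 𝕜 F] {f : 𝕜 → E × F} {f' : E × F}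
    {x : 𝕜} (h : HasDerivAt f f' x) : HasDerivAt (fun y => (f y).1) f'.1 x :=
  (ContinuousLinearMap.fst 𝕜 E F).hasFDerivAt.comp_hasDerivAt x h

theorem HasDerivAt.snd {𝕜 E F : Type*} [NontriviallyNormedField 𝕜] [NormedAddCommGroup E]
    [NormedSpace 𝕜 E] [NormedAddCommGroup F] [NormedSpace 𝕜 F] {f : 𝕜 → E × F} {f' : E × F}
    {x : 𝕜} (h : HasDerivAt f f' x) : HasDerivAt (fun y => (f y).2) f'.2 x :=
  (ContinuousLinearMap.snd 𝕜 E F).hasFDerivAt.comp_hasDerivAt x h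

section Curve

variable {m : ℕ} {ω : ℝ → ℝ × ℝ} {θ : ℝ → ℝ} {t : ℝ}

theorem hasDerivAt_Pf_comp {v : ℝ × ℝ} (h : HasDerivAt ω v t) :
    HasDerivAt (fun u => Pf m (ω u)) (2 * (ω t).1 * v.1 - m * (ω t).2 ^ (m - 1) * v.2) t := by
  refine ((h.fst.fun_pow 2).sub (h.snd.fun_pow m)).congr_deriv ?_
  push_cast
  ring

theorem hasDerivAt_Pf_comp_deriv {d : ℝ} (hω : HasDerivAt ω (cos (θ t), sin (θ t)) t)
    (hθ : HasDerivAt θ d t) :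
    HasDerivAt (fun u => 2 * (ω u).1 * cos (θ u) - m * (ω u).2 ^ (m - 1) * sin (θ u))
      (2 * cos (θ t) ^ 2 - 2 * (ω t).1 * sin (θ t) * d
        - m * (m - 1 : ℕ) * (ω t).2 ^ (m - 2) * sin (θ t) ^ 2
        - m * (ω t).2 ^ (m - 1) * cos (θ t) * d) t := by
  refine (((hω.fst.const_mul 2).mul hθ.cos).sub
    (((hω.snd.fun_pow (m - 1)).const_mul (m : ℝ)).mul hθ.sin)).congr_deriv ?_
  rw [Nat.sub_sub]
  ring

theorem deriv_deriv_Pf_comp {s : Set ℝ} {d : ℝ} (hs : s ∈ 𝓝 t)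
    (hω : ∀ u ∈ s, HasDerivAt ω (cos (θ u), sin (θ u)) u) (hθ : HasDerivAt θ d t) :
    deriv (deriv fun u => Pf m (ω u)) t =
      2 * cos (θ t) ^ 2 - 2 * (ω t).1 * sin (θ t) * d
        - m * (m - 1 : ℕ) * (ω t).2 ^ (m - 2) * sin (θ t) ^ 2
        - m * (ω t).2 ^ (m - 1) * cos (θ t) * d := by
  have hderiv : deriv (fun u => Pf m (ω u)) =ᶠ[𝓝 t]
      fun u => 2 * (ω u).1 * cos (θ u) - m * (ω u).2 ^ (m - 1) * sin (θ u) := by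
    filter_upwards [hs] with u hu
    exact (hasDerivAt_Pf_comp (hω u hu)).deriv
  rw [hderiv.deriv_eq]
  exact (hasDerivAt_Pf_comp_deriv (hω t (mem_of_mem_nhds hs)) hθ).deriv

end Curve

theorem rpow_two_div_mul_pow_le {n : ℕ} (hn : 2 ≤ n) {x y : ℝ} (hx : 0 ≤ x) (hy : 0 ≤ y) :
    x ^ ((2 : ℝ) / n) * y ^ (n - 2) ≤ x + y ^ n := by
  have hn' : (2 : ℝ) ≤ n := by exact_mod_cast hn
  have hw₁ : (2 : ℝ) / n ≤ 1 := (div_le_one (by linarith)).2 hn'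
  have hw₂ : ((n : ℝ) - 2) / n ≤ 1 := (div_le_one (by linarith)).2 (by linarith)
  have hpow : (y ^ n) ^ (((n : ℝ) - 2) / n) = y ^ (n - 2) := by
    rw [← rpow_natCast y n, ← rpow_mul hy, ← rpow_natCast y (n - 2), Nat.cast_sub hn]
    field_simp
    norm_num
  calc x ^ ((2 : ℝ) / n) * y ^ (n - 2)
      ≤ 2 / n * x + (n - 2) / n * y ^ n := by
        rw [← hpow]
        exact geom_mean_le_arith_mean2_weighted (by positivity) (div_nonneg (by linarith)
          (by linarith)) hx (by positivity) (by field_simp; ring)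
    _ ≤ x + y ^ n := add_le_add (mul_le_of_le_one_left hx hw₁)
        (mul_le_of_le_one_left (by positivity) hw₂)

theorem neg_two_mul_le_of_critical {A b c d s K : ℝ} (hs : 0 ≤ s) (hsc : s ^ 2 + c ^ 2 = 1)
    (hcrit : 2 * A * c = b * s)
    (hsecond : 2 * c ^ 2 - 2 * A * s * d - K * s ^ 2 - b * c * d ≤ 0) :
    -(2 * A * d) ≤ K * s ^ 3 := by
  have hmul : s * (2 * c ^ 2 - 2 * A * s * d - K * s ^ 2 - b * c * d)
      = 2 * c ^ 2 * s - 2 * A * d - K * s ^ 3 := by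
    linear_combination (c * d) * hcrit - (2 * A * d) * hsc
  have : 0 ≤ 2 * c ^ 2 * s := by positivity
  nlinarith [mul_nonpos_of_nonneg_of_nonpos hs hsecond]

theorem mul_rpow_le_of_eight_mul_le {m : ℕ} (hodd : Odd m) (hm : 2 ≤ m) {μ A B P s : ℝ} (hμ : 0 < μ)
    (hA : A ≠ 0) (hP : 0 < P) (hAB : A ^ 2 = P + B ^ m) (hs : 0 < s) (hs1 : s ≤ 1)
    (h : 8 * μ * A ^ 2 * P ≤ m * ((m : ℝ) - 1) * B ^ (m - 2) * s ^ 3) :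
    μ * P ^ (((m : ℝ) + 2) / m) ≤ m * ((m : ℝ) - 1) / 8 := by
  have hm0 : (0 : ℝ) < m := by positivity
  have hmm : (0 : ℝ) ≤ m * ((m : ℝ) - 1) :=
    mul_nonneg hm0.le (sub_nonneg.2 (by exact_mod_cast (by omega : 1 ≤ m)))
  have hK : 0 < m * ((m : ℝ) - 1) * B ^ (m - 2) :=
    pos_of_mul_pos_left (lt_of_lt_of_le (by positivity) h) (by positivity)
  have hB : 0 < B := (Nat.Odd.sub_even hm hodd even_two).pow_pos_iff.1
    (pos_of_mul_pos_right hK hmm)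
  have hbound : 8 * μ * A ^ 2 * P ≤ m * ((m : ℝ) - 1) * B ^ (m - 2) :=
    h.trans (mul_le_of_le_one_right hK.le (pow_le_one₀ hs.le hs1))
  have hexp : P ^ (((m : ℝ) + 2) / m) = P * P ^ ((2 : ℝ) / m) := by
    rw [add_div, div_self hm0.ne', rpow_add hP, rpow_one]
  have hA2 : 0 < 8 * A ^ 2 := by positivity
  refine le_of_mul_le_mul_right ?_ hA2
  calc μ * P ^ (((m : ℝ) + 2) / m) * (8 * A ^ 2)
      = P ^ ((2 : ℝ) / m) * (8 * μ * A ^ 2 * P) := by rw [hexp]; ring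
    _ ≤ P ^ ((2 : ℝ) / m) * (m * ((m : ℝ) - 1) * B ^ (m - 2)) := by gcongr
    _ = m * ((m : ℝ) - 1) * (P ^ ((2 : ℝ) / m) * B ^ (m - 2)) := by ring
    _ ≤ m * ((m : ℝ) - 1) * A ^ 2 := by
        rw [hAB]
        exact mul_le_mul_of_nonneg_left (rpow_two_div_mul_pow_le hm hP.le hB.le) hmm
    _ = m * ((m : ℝ) - 1) / 8 * (8 * A ^ 2) := by ring

theorem statement19_general (m : ℕ) (hodd : Odd m) (hm : 5 ≤ m)
    (lam L : ℝ) (hlam : lam < 0)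
    (ω : ℝ → ℝ × ℝ) (θ : ℝ → ℝ)
    (hω : ∀ t ∈ Set.Icc (0:ℝ) L, HasDerivAt ω (Real.cos (θ t), Real.sin (θ t)) t)
    (hθ : ∀ t ∈ Set.Icc (0:ℝ) L, HasDerivAt θ (lam * Qf m (ω t)) t)
    (tstar : ℝ) (htstar : tstar ∈ Set.Ioo (0:ℝ) L)
    (h1 : 0 < (ω tstar).1) (h2 : 0 < Pf m (ω tstar)) (h3 : 0 < Real.sin (θ tstar))
    (h4 : deriv (fun t => Pf m (ω t)) tstar = 0)
    (h5 : deriv (deriv (fun t => Pf m (ω t))) tstar ≤ 0) :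
    |lam| * (Pf m (ω tstar)) ^ (((m : ℝ) + 2) / (m : ℝ)) ≤ (m : ℝ) * ((m : ℝ) - 1) / 8 := by
  have ht : tstar ∈ Set.Icc (0:ℝ) L := Set.Ioo_subset_Icc_self htstar
  have hcrit := (hasDerivAt_Pf_comp (m := m) (hω tstar ht)).deriv.symm.trans h4
  rw [deriv_deriv_Pf_comp (Icc_mem_nhds htstar.1 htstar.2) hω (hθ tstar ht)] at h5
  have hkey := neg_two_mul_le_of_critical h3.le (sin_sq_add_cos_sq _) (sub_eq_zero.1 hcrit) h5
  refine mul_rpow_le_of_eight_mul_le hodd (by omega) (abs_pos.2 hlam.ne) h1.ne' h2 (sub_add_cancel _ _).symm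
    h3 (sin_le_one _) ?_
  calc 8 * |lam| * (ω tstar).1 ^ 2 * Pf m (ω tstar)
      = -(2 * (ω tstar).1 * (lam * Qf m (ω tstar))) := by
        rw [abs_of_neg hlam, Pf, Qf]; ring
    _ ≤ _ := hkey
    _ = _ := by rw [Nat.cast_pred (by omega)]

/-- along a solution of the planar extremal ODE with `λ < 0`, at an interior
time `t*` where `ω₁ > 0`, `P(ω(t*)) > 0`, `sin θ(t*) > 0`, and `P ∘ ω` has vanishing first
derivative and nonpositive second derivative, one has
`|λ| P(ω(t*))^{(m+2)/m} ≤ m(m−1)/8`. -/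
theorem statement19 (m : ℕ) (hodd : Odd m) (hm : 5 ≤ m)
    (lam L : ℝ) (hlam : lam < 0) (hL : 0 < L)
    (ω : ℝ → ℝ × ℝ) (θ : ℝ → ℝ)
    (hω : ∀ t ∈ Set.Icc (0:ℝ) L, HasDerivAt ω (Real.cos (θ t), Real.sin (θ t)) t)
    (hθ : ∀ t ∈ Set.Icc (0:ℝ) L, HasDerivAt θ (lam * Qf m (ω t)) t)
    (tstar : ℝ) (htstar : tstar ∈ Set.Ioo (0:ℝ) L)
    (h1 : 0 < (ω tstar).1) (h2 : 0 < Pf m (ω tstar)) (h3 : 0 < Real.sin (θ tstar))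
    (h4 : deriv (fun t => Pf m (ω t)) tstar = 0)
    (h5 : deriv (deriv (fun t => Pf m (ω t))) tstar ≤ 0) :
    |lam| * (Pf m (ω tstar)) ^ (((m : ℝ) + 2) / (m : ℝ)) ≤ (m : ℝ) * ((m : ℝ) - 1) / 8 :=
  statement19_general m hodd hm lam L hlam ω θ hω hθ tstar htstar h1 h2 h3 h4 h5
end
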